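/- Let V be a real vector space with finrank V = 3, Q a quadratic form on V, and D an element of the Clifford algebra Cl(Q). If D·(involute D)·(reverse D)·(involute (reverse D)) = algebraMap q for some real number q ≠ 0, then D is a unit with two-sided inverse q⁻¹ • ((involute D)·(reverse D)·(involute (reverse D))); that is, D·(q⁻¹ • ((involute D)·(reverse D)·(involute (reverse D)))) = 1 and (q⁻¹ • ((involute D)·(reverse D)·(involute (reverse D))))·D = 1. -/

import Mathlib

/-!
The hypothesis says exactly that `q⁻¹ • (involute D * reverse D * involute (reverse D))` is a
right inverse of `D`. Since `V` is finite-dimensional, so is `⋀ V`, and hence so is `Cl(Q) ≅ ⋀ V`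
(characteristic ≠ 2). A finite-dimensional algebra is Artinian, hence Dedekind-finite, so a
right inverse in `Cl(Q)` is automatically a left inverse.
-/

open CliffordAlgebra

section
variable {K V : Type*} [Field K] [AddCommGroup V] [Module K V] [Module.Finite K V]

theorem exteriorPower.eq_bot_of_finrank_lt {i : ℕ} (hi : Module.finrank K V < i) :
    ⋀[K]^i V = ⊥ := by
  rw [← Submodule.finrank_eq_zero, exteriorPower.finrank_eq, Nat.choose_eq_zero_of_lt hi]

theorem ExteriorAlgebra.iSup_exteriorPower_Iic_finrank_eq_top :
    ⨆ i ∈ Finset.Iic (Module.finrank K V), ⋀[K]^i V = ⊤ := by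
  refine top_le_iff.mp ?_
  rw [← iSup_ι_range_eq_top (Q := (0 : QuadraticForm K V))]
  refine iSup_le fun i => ?_
  rcases le_or_gt i (Module.finrank K V) with hi | hi
  · exact le_biSup (fun i => ⋀[K]^i V) (Finset.mem_Iic.mpr hi)
  · exact (exteriorPower.eq_bot_of_finrank_lt hi).le.trans bot_le

instance ExteriorAlgebra.instModuleFinite : Module.Finite K (ExteriorAlgebra K V) := by
  have h := Submodule.fg_biSup (Finset.Iic (Module.finrank K V)) (fun i => ⋀[K]^i V)
    fun i _ => Module.Finite.iff_fg.mp inferInstance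
  rw [ExteriorAlgebra.iSup_exteriorPower_Iic_finrank_eq_top] at h
  exact ⟨h⟩

instance CliffordAlgebra.instModuleFinite [Invertible (2 : K)] (Q : QuadraticForm K V) :
    Module.Finite K (CliffordAlgebra Q) :=
  .equiv (equivExterior Q).symm

instance CliffordAlgebra.instIsDedekindFiniteMonoid [Invertible (2 : K)]
    (Q : QuadraticForm K V) : IsDedekindFiniteMonoid (CliffordAlgebra Q) :=
  have := IsArtinianRing.of_finite K (CliffordAlgebra Q)
  inferInstance

end

theorem mul_inv_smul_eq_one_of_mul_eq_algebraMap {K A : Type*} [Field K] [Ring A] [Algebra K A]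
    {a b : A} {q : K} (hq : q ≠ 0) (h : a * b = algebraMap K A q) : a * (q⁻¹ • b) = 1 := by
  rw [mul_smul_comm, h, Algebra.algebraMap_eq_smul_one, smul_smul, inv_mul_cancel₀ hq, one_smul]

theorem stmt_15 (V : Type*) [AddCommGroup V] [Module ℝ V]
    (hV : Module.finrank ℝ V = 3) (Q : QuadraticForm ℝ V)
    (D : CliffordAlgebra Q) (q : ℝ) (hq : q ≠ 0)
    (hdet : D * involute D * reverse D * involute (reverse D) =
      algebraMap ℝ (CliffordAlgebra Q) q) :
    D * (q⁻¹ • (involute D * reverse D * involute (reverse D))) = 1 ∧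
      (q⁻¹ • (involute D * reverse D * involute (reverse D))) * D = 1 := by
  have : Module.Finite ℝ V := Module.finite_of_finrank_eq_succ hV
  have : Invertible (2 : ℝ) := invertibleOfNonzero two_ne_zero
  have hright : D * (q⁻¹ • (involute D * reverse D * involute (reverse D))) = 1 :=
    mul_inv_smul_eq_one_of_mul_eq_algebraMap hq (by simpa only [mul_assoc] using hdet)
  exact ⟨hright, mul_eq_one_comm.mp hright⟩
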